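/- (Main Theorem: adaptive safety via an adaptive Control Barrier Function, trajectory form.) Let h_a : ℝⁿ × ℝᵖ → ℝ be continuously differentiable, f : ℝⁿ → ℝⁿ, F : ℝⁿ → ℝ^{n×p}, g : ℝⁿ → ℝ^{n×m} be continuous, Γ ∈ ℝ^{p×p} be symmetric positive definite with smallest eigenvalue λ_min(Γ), θ⋆ ∈ ℝᵖ, and c > 0. Suppose x : [0,∞) → ℝⁿ, θ̂ : [0,∞) → ℝᵖ, u : [0,∞) → ℝᵐ are differentiable and satisfy for all t ≥ 0: (i) ẋ(t) = f(x(t)) + F(x(t)) θ⋆ + g(x(t)) u(t); (ii) θ̂̇(t) = Γ τ(t) with τ(t) = −( (∂h_a/∂x)(x(t),θ̂(t)) · F(x(t)) )ᵀ; (iii) the aCBF inequality (∂h_a/∂x)(x(t),θ̂(t)) · ( f(x(t)) + F(x(t)) · ( θ̂(t) − Γ ((∂h_a/∂θ)(x(t),θ̂(t)))ᵀ ) + g(x(t)) u(t) ) ≥ 0. If additionally h_a(x(0), θ̂(0)) > 0, ‖θ⋆ − θ̂(0)‖ ≤ c, and λ_min(Γ) ≥ c² / (2 h_a(x(0),θ̂(0))),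 then h_a(x(t), θ̂(t)) ≥ 0 for all t ≥ 0; i.e., the state remains in the family of safe sets S_{θ̂(t)} = {x : h_a(x,θ̂(t)) ≥ 0} for all time. -/

import Mathlib

open Matrix

/-- The Euclidean norm of a vector in `ℝ^p`. -/
noncomputable def euclNorm {p : ℕ} (v : Fin p → ℝ) : ℝ :=
  ‖(WithLp.equiv 2 (Fin p → ℝ)).symm v‖

/-!
Along the closed loop, `V = h_a(x, θ̂) - ½ θ̃ᵀ Γ⁻¹ θ̃` with `θ̃ = θ⋆ - θ̂` is nondecreasing: the
adaptation law makes the unknown term `∂h_a/∂x · F θ⋆` in `d/dt h_a` cancel against the derivative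
of the quadratic term, and what remains is exactly the left side of the aCBF inequality. Since
`λ_min(Γ) · θ̃ᵀ Γ⁻¹ θ̃ ≤ ‖θ̃‖²`, the gain condition makes `V ≥ 0` at time `0`, hence
`h_a(x(t), θ̂(t)) ≥ V(t) ≥ V(0) ≥ 0`.
-/

namespace Matrix

variable {ι : Type*} [Fintype ι]

lemma IsSymm.dotProduct_mulVec_comm {α : Type*} [CommSemiring α] {A : Matrix ι ι α}
    (hA : A.IsSymm) (v w : ι → α) : v ⬝ᵥ A *ᵥ w = w ⬝ᵥ A *ᵥ v := by
  rw [dotProduct_mulVec, ← mulVec_transpose, hA.eq, dotProduct_comm]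

lemma IsHermitian.iInf_eigenvalues_mul_dotProduct_le [DecidableEq ι] {A : Matrix ι ι ℝ}
    (hA : A.IsHermitian) (w : ι → ℝ) :
    (⨅ i, hA.eigenvalues i) * (w ⬝ᵥ w) ≤ w ⬝ᵥ A *ᵥ w := by
  set U : Matrix ι ι ℝ := (hA.eigenvectorUnitary : Matrix ι ι ℝ)
  -- the coordinates of `w` in an orthonormal eigenbasis of `A`
  set y := Uᵀ *ᵥ w
  have hconj : ∀ D : Matrix ι ι ℝ, w ⬝ᵥ (U * D * star U) *ᵥ w = y ⬝ᵥ D *ᵥ y := by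
    intro D
    rw [← mulVec_mulVec, ← mulVec_mulVec, dotProduct_mulVec w U, ← mulVec_transpose,
      star_eq_conjTranspose, conjTranspose_eq_transpose_of_trivial]
  have hnorm : w ⬝ᵥ w = y ⬝ᵥ y := by simpa [U] using hconj 1
  have hquad : w ⬝ᵥ A *ᵥ w = ∑ i, hA.eigenvalues i * (y i * y i) := by
    conv_lhs => rw [hA.spectral_theorem]
    rw [Unitary.conjStarAlgAut_apply, hconj]
    simp [dotProduct, mulVec_diagonal, mul_left_comm]
  rw [hnorm, hquad, dotProduct, Finset.mul_sum]
  exact Finset.sum_le_sum fun i _ =>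
    mul_le_mul_of_nonneg_right (ciInf_le (Finite.bddBelow_range _) i) (mul_self_nonneg _)

lemma PosDef.iInf_eigenvalues_mul_dotProduct_inv_mulVec_le [DecidableEq ι] {A : Matrix ι ι ℝ}
    (hA : A.PosDef) (v : ι → ℝ) :
    (⨅ i, hA.1.eigenvalues i) * (v ⬝ᵥ A⁻¹ *ᵥ v) ≤ v ⬝ᵥ v := by
  set lam := ⨅ i, hA.1.eigenvalues i
  set w := A⁻¹ *ᵥ v
  have hv : A *ᵥ w = v := by
    rw [mulVec_mulVec, mul_nonsing_inv A hA.det_pos.ne'.isUnit, one_mulVec]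
  have hs : v ⬝ᵥ w = w ⬝ᵥ A *ᵥ w := by rw [hv, dotProduct_comm]
  have hlam : 0 ≤ lam := Real.iInf_nonneg fun i => (hA.eigenvalues_pos i).le
  have hray : lam * (w ⬝ᵥ w) ≤ v ⬝ᵥ w := hs ▸ hA.1.iInf_eigenvalues_mul_dotProduct_le w
  have hcs : (v ⬝ᵥ w) ^ 2 ≤ (v ⬝ᵥ v) * (w ⬝ᵥ w) := by
    simpa [dotProduct, pow_two] using Finset.sum_mul_sq_le_sq_mul_sq Finset.univ v w
  have hvv : 0 ≤ v ⬝ᵥ v := by simpa using dotProduct_self_star_nonneg v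
  have hvw : 0 ≤ v ⬝ᵥ w := hs ▸ hA.posSemidef.dotProduct_mulVec_nonneg w
  rcases hvw.eq_or_lt with h0 | hpos
  · simpa [← h0] using hvv
  · refine le_of_mul_le_mul_right ?_ hpos
    calc lam * (v ⬝ᵥ w) * (v ⬝ᵥ w) ≤ lam * ((v ⬝ᵥ v) * (w ⬝ᵥ w)) := by
          rw [mul_assoc, ← pow_two]; exact mul_le_mul_of_nonneg_left hcs hlam
      _ ≤ (v ⬝ᵥ v) * (v ⬝ᵥ w) := by
          rw [mul_left_comm]; exact mul_le_mul_of_nonneg_left hray hvv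

end Matrix

section Calculus

variable {𝕜 : Type*} [NontriviallyNormedField 𝕜] {ι : Type*} [Fintype ι]
  {v w : 𝕜 → ι → 𝕜} {v' w' : ι → 𝕜} {t : 𝕜}

theorem HasDerivAt.dotProduct (hv : HasDerivAt v v' t) (hw : HasDerivAt w w' t) :
    HasDerivAt (fun s => v s ⬝ᵥ w s) (v' ⬝ᵥ w t + v t ⬝ᵥ w') t := by
  simp only [_root_.dotProduct, ← Finset.sum_add_distrib]
  exact HasDerivAt.fun_sum fun i _ => (hasDerivAt_pi.1 hv i).mul (hasDerivAt_pi.1 hw i)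

theorem HasDerivAt.mulVec (A : Matrix ι ι 𝕜) (hv : HasDerivAt v v' t) :
    HasDerivAt (fun s => A *ᵥ v s) (A *ᵥ v') t :=
  hasDerivAt_pi.2 fun i => by
    simpa [Matrix.mulVec] using (hasDerivAt_const t (A i)).dotProduct hv

theorem HasDerivAt.dotProduct_mulVec_self {A : Matrix ι ι 𝕜} (hA : A.IsSymm)
    (hv : HasDerivAt v v' t) :
    HasDerivAt (fun s => v s ⬝ᵥ A *ᵥ v s) (2 * (v' ⬝ᵥ A *ᵥ v t)) t := by
  convert hv.dotProduct (hv.mulVec A) using 1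
  rw [hA.dotProduct_mulVec_comm (v t), two_mul]

variable {E F G : Type*} [NormedAddCommGroup E] [NormedSpace 𝕜 E] [NormedAddCommGroup F]
  [NormedSpace 𝕜 F] [NormedAddCommGroup G] [NormedSpace 𝕜 G]

theorem DifferentiableAt.hasDerivAt_comp_prodMk {h : E × F → G} {x : 𝕜 → E} {y : 𝕜 → F}
    {x' : E} {y' : F} (hh : DifferentiableAt 𝕜 h (x t, y t)) (hx : HasDerivAt x x' t)
    (hy : HasDerivAt y y' t) :
    HasDerivAt (fun s => h (x s, y s))
      (fderiv 𝕜 (fun e => h (e, y t)) (x t) x' + fderiv 𝕜 (fun f => h (x t, f)) (y t) y') t := by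
  have hleft : HasFDerivAt (fun e => h (e, y t)) _ (x t) :=
    hh.hasFDerivAt.comp (x t) (hasFDerivAt_prodMk_left (𝕜 := 𝕜) (x t) (y t))
  have hright : HasFDerivAt (fun f => h (x t, f)) _ (y t) :=
    hh.hasFDerivAt.comp (y t) (hasFDerivAt_prodMk_right (𝕜 := 𝕜) (x t) (y t))
  rw [hleft.fderiv, hright.fderiv]
  refine (hh.hasFDerivAt.comp_hasDerivAt t (hx.prodMk hy)).congr_deriv ?_
  rw [ContinuousLinearMap.comp_apply, ContinuousLinearMap.comp_apply, ← map_add]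
  simp

end Calculus

namespace ContinuousLinearMap

theorem apply_mulVec {ι κ : Type*} [Fintype κ] (L : (ι → ℝ) →L[ℝ] ℝ) (M : Matrix ι κ ℝ)
    (w : κ → ℝ) : L (M *ᵥ w) = (fun i => L (Mᵀ i)) ⬝ᵥ w := by
  simp [mulVec_eq_sum, map_sum, dotProduct, mul_comm]

theorem apply_eq_dotProduct {κ : Type*} [Fintype κ] [DecidableEq κ] (G : (κ → ℝ) →L[ℝ] ℝ)
    (v : κ → ℝ) : G v = (fun i => G (Pi.single i 1)) ⬝ᵥ v := by
  have hcol : ∀ i, (1 : Matrix κ κ ℝ)ᵀ i = Pi.single i 1 := by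
    intro i; ext j; simp [one_apply, Pi.single_apply, eq_comm]
  simpa [hcol] using G.apply_mulVec 1 v

end ContinuousLinearMap

theorem monotoneOn_Ici_of_hasDerivAt_nonneg {V V' : ℝ → ℝ} {a : ℝ}
    (hV : ∀ t, a ≤ t → HasDerivAt V (V' t) t) (hV' : ∀ t, a ≤ t → 0 ≤ V' t) :
    MonotoneOn V (Set.Ici a) := by
  refine monotoneOn_of_hasDerivWithinAt_nonneg (f' := V') (convex_Ici a)
    (fun t ht => (hV t ht).continuousAt.continuousWithinAt) (fun t ht => ?_) (fun t ht => ?_)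
  all_goals rw [interior_Ici] at ht
  · exact (hV t ht.le).hasDerivWithinAt
  · exact hV' t ht.le

theorem sq_euclNorm {p : ℕ} (v : Fin p → ℝ) : euclNorm v ^ 2 = v ⬝ᵥ v := by
  rw [euclNorm, EuclideanSpace.real_norm_sq_eq]
  simp [dotProduct, pow_two]

section AdaptiveCBF

variable {ι κ : Type*} [Fintype κ] [DecidableEq κ]

noncomputable def aCBFLyapunov (ha : (ι → ℝ) × (κ → ℝ) → ℝ) (Γ : Matrix κ κ ℝ) (θs : κ → ℝ)
    (x : ι → ℝ) (θh : κ → ℝ) : ℝ :=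
  ha (x, θh) - (θs - θh) ⬝ᵥ Γ⁻¹ *ᵥ (θs - θh) / 2

variable {ha : (ι → ℝ) × (κ → ℝ) → ℝ} {Γ : Matrix κ κ ℝ} {θs : κ → ℝ}

theorem aCBFLyapunov_le (hΓ : Γ.PosDef) (x : ι → ℝ) (θh : κ → ℝ) :
    aCBFLyapunov ha Γ θs x θh ≤ ha (x, θh) := by
  have hquad := hΓ.inv.posSemidef.dotProduct_mulVec_nonneg (θs - θh)
  simp only [aCBFLyapunov, star_trivial] at hquad ⊢
  linarith

theorem aCBFLyapunov_nonneg (hΓ : Γ.PosDef) {x : ι → ℝ} {θh : κ → ℝ} {c : ℝ}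
    (hh : 0 < ha (x, θh)) (hc : 0 < c) (hθ : (θs - θh) ⬝ᵥ (θs - θh) ≤ c ^ 2)
    (hgain : (⨅ i, hΓ.1.eigenvalues i) ≥ c ^ 2 / (2 * ha (x, θh))) :
    0 ≤ aCBFLyapunov ha Γ θs x θh := by
  set lam := ⨅ i, hΓ.1.eigenvalues i
  have hlam : 0 < lam := lt_of_lt_of_le (by positivity) hgain
  have hgain' : c ^ 2 ≤ 2 * ha (x, θh) * lam := by
    rwa [ge_iff_le, div_le_iff₀ (by positivity), mul_comm] at hgain
  have hq := hΓ.iInf_eigenvalues_mul_dotProduct_inv_mulVec_le (θs - θh)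
  have hquad : (θs - θh) ⬝ᵥ Γ⁻¹ *ᵥ (θs - θh) ≤ 2 * ha (x, θh) :=
    le_of_mul_le_mul_left (by linarith) hlam
  simp only [aCBFLyapunov]
  linarith

theorem aCBFLyapunov_deriv_eq [Fintype ι] (hΓ : Γ.PosDef) (L : (ι → ℝ) →L[ℝ] ℝ)
    (G : (κ → ℝ) →L[ℝ] ℝ) (F : Matrix ι κ ℝ) (a b : ι → ℝ) (θh : κ → ℝ) :
    L (a + F *ᵥ θs + b) + G (Γ *ᵥ fun i => -L (Fᵀ i))
        + (Γ *ᵥ fun i => -L (Fᵀ i)) ⬝ᵥ Γ⁻¹ *ᵥ (θs - θh)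
      = L (a + F *ᵥ (θh - Γ *ᵥ fun i => G (Pi.single i 1)) + b) := by
  have hΓsymm : Γ.IsSymm := by simpa using hΓ.1
  have hL : ∀ w, (fun i => -L (Fᵀ i)) ⬝ᵥ w = -L (F *ᵥ w) := fun w => by
    rw [L.apply_mulVec, ← neg_dotProduct]; rfl
  have hG : G (Γ *ᵥ fun i => -L (Fᵀ i)) = -L (F *ᵥ Γ *ᵥ fun i => G (Pi.single i 1)) := by
    rw [G.apply_eq_dotProduct, hΓsymm.dotProduct_mulVec_comm, hL]
  have hQ : (Γ *ᵥ fun i => -L (Fᵀ i)) ⬝ᵥ Γ⁻¹ *ᵥ (θs - θh) = -L (F *ᵥ (θs - θh)) := by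
    rw [dotProduct_comm, hΓsymm.dotProduct_mulVec_comm, mulVec_mulVec,
      mul_nonsing_inv Γ hΓ.det_pos.ne'.isUnit, one_mulVec, hL]
  rw [hG, hQ]
  simp only [map_add, map_sub, mulVec_sub]
  ring

theorem hasDerivAt_aCBFLyapunov [Fintype ι] (hΓ : Γ.PosDef) {x : ℝ → ι → ℝ} {θh τ : ℝ → κ → ℝ}
    {F : Matrix ι κ ℝ} {a b : ι → ℝ} {t : ℝ} (hha : DifferentiableAt ℝ ha (x t, θh t))
    (hτ : τ t = fun i => -fderiv ℝ (fun y => ha (y, θh t)) (x t) (Fᵀ i))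
    (hx : HasDerivAt x (a + F *ᵥ θs + b) t) (hθh : HasDerivAt θh (Γ *ᵥ τ t) t) :
    HasDerivAt (fun s => aCBFLyapunov ha Γ θs (x s) (θh s))
      (fderiv ℝ (fun y => ha (y, θh t)) (x t)
        (a + F *ᵥ (θh t - Γ *ᵥ fun i => fderiv ℝ (fun θ => ha (x t, θ)) (θh t) (Pi.single i 1))
          + b)) t := by
  have hΓinv : (Γ⁻¹).IsSymm := by simpa using hΓ.inv.1
  have hq := (hθh.const_sub θs).dotProduct_mulVec_self hΓinv
  refine ((hha.hasDerivAt_comp_prodMk hx hθh).sub (hq.div_const 2)).congr_deriv ?_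
  rw [← aCBFLyapunov_deriv_eq hΓ _ _ F a b (θh t), ← hτ, neg_dotProduct]
  ring

end AdaptiveCBF

theorem aCBF_renders_adaptively_safe_general
    {n p m : ℕ}
    (ha : ((Fin n → ℝ) × (Fin p → ℝ)) → ℝ) (hha : ContDiff ℝ 1 ha)
    (f : (Fin n → ℝ) → (Fin n → ℝ))
    (F : (Fin n → ℝ) → Matrix (Fin n) (Fin p) ℝ)
    (g : (Fin n → ℝ) → Matrix (Fin n) (Fin m) ℝ)
    (Γ : Matrix (Fin p) (Fin p) ℝ) (hΓ : Γ.PosDef)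
    (θs : Fin p → ℝ) (c : ℝ) (hc : 0 < c)
    (x : ℝ → (Fin n → ℝ)) (θh : ℝ → (Fin p → ℝ)) (u : ℝ → (Fin m → ℝ))
    -- the adaptation law τ(t) = −((∂h_a/∂x)(x(t),θ̂(t)) · F(x(t)))ᵀ
    (τ : ℝ → (Fin p → ℝ))
    (hτ : ∀ t, 0 ≤ t → τ t = fun i =>
      -(fderiv ℝ (fun y => ha (y, θh t)) (x t)) (fun j => F (x t) j i))
    -- (i) closed-loop dynamics ẋ = f(x) + F(x) θ⋆ + g(x) u
    (hx : ∀ t, 0 ≤ t → HasDerivAt x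
      (f (x t) + (F (x t)).mulVec θs + (g (x t)).mulVec (u t)) t)
    -- (ii) parameter update θ̂̇ = Γ τ
    (hθh : ∀ t, 0 ≤ t → HasDerivAt θh (Γ.mulVec (τ t)) t)
    -- (iii) the aCBF inequality
    (hcbf : ∀ t, 0 ≤ t →
      0 ≤ (fderiv ℝ (fun y => ha (y, θh t)) (x t))
        (f (x t)
          + (F (x t)).mulVec
              (θh t - Γ.mulVec (fun i =>
                (fderiv ℝ (fun θ => ha (x t, θ)) (θh t)) (Pi.single i 1)))
          + (g (x t)).mulVec (u t)))
    -- initial conditions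
    (hinit : 0 < ha (x 0, θh 0))
    (hθ0 : euclNorm (θs - θh 0) ≤ c)
    -- adaptive gain lower bound λ_min(Γ) ≥ c²/(2 h_a(x₀,θ̂₀))
    (hgain : (⨅ i, hΓ.1.eigenvalues i) ≥ c ^ 2 / (2 * ha (x 0, θh 0))) :
    ∀ t, 0 ≤ t → 0 ≤ ha (x t, θh t) := by
  have hmono : MonotoneOn (fun s => aCBFLyapunov ha Γ θs (x s) (θh s)) (Set.Ici 0) :=
    monotoneOn_Ici_of_hasDerivAt_nonneg
      (fun t ht => hasDerivAt_aCBFLyapunov hΓ (hha.differentiable one_ne_zero _) (hτ t ht)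
        (hx t ht) (hθh t ht))
      hcbf
  have hV0 : 0 ≤ aCBFLyapunov ha Γ θs (x 0) (θh 0) :=
    aCBFLyapunov_nonneg hΓ hinit hc (by rw [← sq_euclNorm]; gcongr; exact norm_nonneg _) hgain
  intro t ht
  exact (hV0.trans (hmono Set.self_mem_Ici ht ht)).trans (aCBFLyapunov_le hΓ _ _)

/-- Main theorem (adaptive safety via an aCBF, trajectory form): along the
closed-loop adaptive system with update law `τ = −((∂h_a/∂x) F(x))ᵀ` and
satisfying the aCBF inequality, if `h_a(x(0),θ̂(0)) > 0`, `‖θ⋆ − θ̂(0)‖ ≤ c` and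
`λ_min(Γ) ≥ c²/(2 h_a(x(0),θ̂(0)))`, then `h_a(x(t),θ̂(t)) ≥ 0` for all `t ≥ 0`. -/
theorem aCBF_renders_adaptively_safe
    {n p m : ℕ}
    (ha : ((Fin n → ℝ) × (Fin p → ℝ)) → ℝ) (hha : ContDiff ℝ 1 ha)
    (f : (Fin n → ℝ) → (Fin n → ℝ)) (hf : Continuous f)
    (F : (Fin n → ℝ) → Matrix (Fin n) (Fin p) ℝ) (hF : Continuous F)
    (g : (Fin n → ℝ) → Matrix (Fin n) (Fin m) ℝ) (hg : Continuous g)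
    (Γ : Matrix (Fin p) (Fin p) ℝ) (hΓ : Γ.PosDef)
    (θs : Fin p → ℝ) (c : ℝ) (hc : 0 < c)
    (x : ℝ → (Fin n → ℝ)) (θh : ℝ → (Fin p → ℝ)) (u : ℝ → (Fin m → ℝ))
    -- the adaptation law τ(t) = −((∂h_a/∂x)(x(t),θ̂(t)) · F(x(t)))ᵀ
    (τ : ℝ → (Fin p → ℝ))
    (hτ : ∀ t, 0 ≤ t → τ t = fun i =>
      -(fderiv ℝ (fun y => ha (y, θh t)) (x t)) (fun j => F (x t) j i))
    -- (i) closed-loop dynamics ẋ = f(x) + F(x) θ⋆ + g(x) u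
    (hx : ∀ t, 0 ≤ t → HasDerivAt x
      (f (x t) + (F (x t)).mulVec θs + (g (x t)).mulVec (u t)) t)
    -- (ii) parameter update θ̂̇ = Γ τ
    (hθh : ∀ t, 0 ≤ t → HasDerivAt θh (Γ.mulVec (τ t)) t)
    -- (iii) the aCBF inequality
    (hcbf : ∀ t, 0 ≤ t →
      0 ≤ (fderiv ℝ (fun y => ha (y, θh t)) (x t))
        (f (x t)
          + (F (x t)).mulVec
              (θh t - Γ.mulVec (fun i =>
                (fderiv ℝ (fun θ => ha (x t, θ)) (θh t)) (Pi.single i 1)))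
          + (g (x t)).mulVec (u t)))
    -- initial conditions
    (hinit : 0 < ha (x 0, θh 0))
    (hθ0 : euclNorm (θs - θh 0) ≤ c)
    -- adaptive gain lower bound λ_min(Γ) ≥ c²/(2 h_a(x₀,θ̂₀))
    (hgain : (⨅ i, hΓ.1.eigenvalues i) ≥ c ^ 2 / (2 * ha (x 0, θh 0))) :
    ∀ t, 0 ≤ t → 0 ≤ ha (x t, θh t) :=
  aCBF_renders_adaptively_safe_general ha hha f F g Γ hΓ θs c hc x θh u τ hτ hx hθh hcbf hinit hθ0
    hgain
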